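/- arXiv:1411.4173 — 2 statements merged into one kernel-verified Lean document; each statement's English description precedes it below -/
import Mathlib

section
/- (Supermartingale convergence theorem.) Let M be a supermartingale in an imprecise probability tree that is bounded below (there is a real B with M(s) ≥ B for all situations s). Then M converges strictly almost surely to a real variable: the event {ω ∈ Ω : the sequence (M(ω^n))_{n∈ℕ} does not converge to a limit in ℝ} is strictly null. -/
/-!
With `L = B - 1` the process `M - L` is a positive price on which one may bet nonnegative stakes;
by positive homogeneity of the local models, the capital of any such bet is again a
supermartingale. Holding `M - L` gets rich on paths where `M → ∞`. For rationals `a < b`, the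
strategy that puts all its wealth on `M - L` whenever `M ≤ a` and cashes out once `M ≥ b`
multiplies its wealth by at least `(b - L) / (a - L) > 1` at each upcrossing of `[a, b]`, and since
`M ≥ B` it never holds less than the fraction `(B - L) / (a - L)` of it in between; so its capital
tends to `∞` on paths that cross `[a, b]` infinitely often. A bounded below sequence that does not
converge either tends to `∞` or crosses some rational interval infinitely often, so the countable
mixture of all these strategies with weights `2^{-(j+1)}` is a test supermartingale tending to `∞`
on every path where `M` does not converge.
-/

open Filter Topology

namespace IP

/-- A situation of length `n`: a tuple of the first `n` states. -/
abbrev Sit (𝒳 : ℕ → Type) (n : ℕ) := (i : Fin n) → 𝒳 i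

/-- A path: an infinite sequence of states. -/
abbrev Path (𝒳 : ℕ → Type) := (i : ℕ) → 𝒳 i

/-- The initial segment `ω^n` of a path. -/
def res {𝒳 : ℕ → Type} (ω : Path 𝒳) (n : ℕ) : Sit 𝒳 n := fun i => ω i

/-- The initial (empty) situation `□`. -/
def emptySit {𝒳 : ℕ → Type} : Sit 𝒳 0 := fun i => i.elim0

/-- Append a next state to a situation. -/
def snoc {𝒳 : ℕ → Type} {n : ℕ} (s : Sit 𝒳 n) (x : 𝒳 n) : Sit 𝒳 (n + 1) := fun i =>
  if h : (i : ℕ) < n then s ⟨i, h⟩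
  else cast (congrArg 𝒳 (Nat.le_antisymm (Nat.le_of_not_lt h) (Nat.lt_succ_iff.mp i.isLt))) x

/-- Truncate a situation of length `n` to its first `k` states. -/
def trunc {𝒳 : ℕ → Type} {n : ℕ} (s : Sit 𝒳 n) (k : ℕ) (h : k ≤ n) : Sit 𝒳 k :=
  fun i => s ⟨i, lt_of_lt_of_le i.isLt h⟩

/-- A (coherent) lower expectation on a nonempty finite set. -/
def IsLE {Y : Type} [Fintype Y] [Nonempty Y] (E : (Y → ℝ) → ℝ) : Prop :=
  (∀ f : Y → ℝ, (⨅ y, f y) ≤ E f) ∧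
  (∀ f g : Y → ℝ, E f + E g ≤ E (fun y => f y + g y)) ∧
  (∀ (f : Y → ℝ) (c : ℝ), 0 ≤ c → E (fun y => c * f y) = c * E f)

/-- Submartingale w.r.t. the local models `Q` of an imprecise probability tree. -/
def IsSubmartingale {𝒳 : ℕ → Type} (Q : ∀ n, Sit 𝒳 n → (𝒳 n → ℝ) → ℝ)
    (F : ∀ n, Sit 𝒳 n → ℝ) : Prop :=
  ∀ (n : ℕ) (s : Sit 𝒳 n), 0 ≤ Q n s (fun x => F (n + 1) (snoc s x) - F n s)

/-- Supermartingale: `-F` is a submartingale. -/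
def IsSupermartingale {𝒳 : ℕ → Type} (Q : ∀ n, Sit 𝒳 n → (𝒳 n → ℝ) → ℝ)
    (F : ∀ n, Sit 𝒳 n → ℝ) : Prop :=
  IsSubmartingale Q (fun n s => -F n s)

/-- A test supermartingale: nonnegative, starting at 1. -/
def IsTestSupermartingale {𝒳 : ℕ → Type} (Q : ∀ n, Sit 𝒳 n → (𝒳 n → ℝ) → ℝ)
    (F : ∀ n, Sit 𝒳 n → ℝ) : Prop :=
  IsSupermartingale Q F ∧ (∀ n s, 0 ≤ F n s) ∧ F 0 emptySit = 1

/-- An event is strictly null if some test supermartingale converges to `+∞` on it. -/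
def StrictlyNull {𝒳 : ℕ → Type} (Q : ∀ n, Sit 𝒳 n → (𝒳 n → ℝ) → ℝ)
    (A : Set (Path 𝒳)) : Prop :=
  ∃ F : ∀ n, Sit 𝒳 n → ℝ, IsTestSupermartingale Q F ∧
    ∀ ω ∈ A, Tendsto (fun n => F n (res ω n)) atTop atTop

/-- `limsup_n F(ω^n)` as an extended real. -/
noncomputable def pathLimsup {𝒳 : ℕ → Type} (F : ∀ n, Sit 𝒳 n → ℝ) (ω : Path 𝒳) : EReal :=
  Filter.limsup (fun n => (F n (res ω n) : EReal)) atTop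

/-- `liminf_n F(ω^n)` as an extended real. -/
noncomputable def pathLiminf {𝒳 : ℕ → Type} (F : ∀ n, Sit 𝒳 n → ℝ) (ω : Path 𝒳) : EReal :=
  Filter.liminf (fun n => (F n (res ω n) : EReal)) atTop

/-- A real process bounded above. -/
def BddAbv {𝒳 : ℕ → Type} (F : ∀ n, Sit 𝒳 n → ℝ) : Prop := ∃ B : ℝ, ∀ n s, F n s ≤ B

/-- A real process bounded below. -/
def BddBlw {𝒳 : ℕ → Type} (F : ∀ n, Sit 𝒳 n → ℝ) : Prop := ∃ B : ℝ, ∀ n s, B ≤ F n s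

/-- Conditional global lower expectation `E(f|s)` of an extended real variable. -/
noncomputable def lexp {𝒳 : ℕ → Type} (Q : ∀ n, Sit 𝒳 n → (𝒳 n → ℝ) → ℝ) {n : ℕ}
    (s : Sit 𝒳 n) (f : Path 𝒳 → EReal) : EReal :=
  sSup ((fun F : ∀ k, Sit 𝒳 k → ℝ => (F n s : EReal)) ''
    {F : ∀ k, Sit 𝒳 k → ℝ | IsSubmartingale Q F ∧ BddAbv F ∧
      ∀ ω : Path 𝒳, res ω n = s → pathLimsup F ω ≤ f ω})

/-- Conditional global upper expectation `Ē(f|s)`. -/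
noncomputable def uexp {𝒳 : ℕ → Type} (Q : ∀ n, Sit 𝒳 n → (𝒳 n → ℝ) → ℝ) {n : ℕ}
    (s : Sit 𝒳 n) (f : Path 𝒳 → EReal) : EReal :=
  - lexp Q s (fun ω => - f ω)

/-- The local models of a (time-homogeneous) imprecise Markov chain with initial model `E1`
and transition models `QT`. -/
def markovQ {X : Type} (E1 : (X → ℝ) → ℝ) (QT : X → (X → ℝ) → ℝ) :
    ∀ n, Sit (fun _ => X) n → (X → ℝ) → ℝ
  | 0, _ => E1
  | n + 1, s => QT (s ⟨n, Nat.lt_succ_self n⟩)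

/-- Prefix a path with a situation (fixed state space). -/
def prependX {X : Type} {n : ℕ} (s : Sit (fun _ => X) n) (ω : ℕ → X) : ℕ → X :=
  fun i => if h : i < n then s ⟨i, h⟩ else ω (i - n)

/-- Extension of a lower transition operator to extended real maps. -/
noncomputable def Text {X : Type} (T : (X → ℝ) → X → ℝ) (g : X → EReal) : X → EReal :=
  fun x => sSup ((fun h : X → ℝ => (T h x : EReal)) '' {h : X → ℝ | ∀ y, (h y : EReal) ≤ g y})

/-- The variation (semi)norm `max h - min h`. -/
noncomputable def varnorm {X : Type} [Fintype X] [Nonempty X] (h : X → ℝ) : ℝ :=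
  (⨆ x, h x) - ⨅ x, h x

/-- The (weak) coefficient of ergodicity of a lower transition operator. -/
noncomputable def coeff {X : Type} [Fintype X] [Nonempty X] (S : (X → ℝ) → X → ℝ) : ℝ :=
  sSup {v : ℝ | ∃ h : X → ℝ, (∀ x, 0 ≤ h x ∧ h x ≤ 1) ∧ v = varnorm (S h)}

/-- Extend a situation to a path, arbitrarily. -/
noncomputable def extend {𝒳 : ℕ → Type} [∀ k, Nonempty (𝒳 k)] {n : ℕ} (t : Sit 𝒳 n) :
    Path 𝒳 :=
  fun i => if h : i < n then t ⟨i, h⟩ else Classical.arbitrary (𝒳 i)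


section Convergence

variable {𝒳 : ℕ → Type}

theorem trunc_snoc {n : ℕ} (s : Sit 𝒳 n) (x : 𝒳 n) : trunc (snoc s x) n n.le_succ = s := by
  funext i
  simp [trunc, snoc]

def IsNonnegTransform (M K : ∀ n, Sit 𝒳 n → ℝ) : Prop :=
  ∃ H : ∀ n, Sit 𝒳 n → ℝ, (∀ n s, 0 ≤ H n s) ∧
    ∀ n s x, K (n + 1) (snoc s x) = K n s + H n s * (M (n + 1) (snoc s x) - M n s)

theorem IsNonnegTransform.isSupermartingale {Q : ∀ n, Sit 𝒳 n → (𝒳 n → ℝ) → ℝ}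
    (hQ : ∀ n s (f : 𝒳 n → ℝ) (c : ℝ), 0 ≤ c → Q n s (fun y => c * f y) = c * Q n s f)
    {M K : ∀ n, Sit 𝒳 n → ℝ} (hM : IsSupermartingale Q M) (hK : IsNonnegTransform M K) :
    IsSupermartingale Q K := by
  obtain ⟨H, hH, hKH⟩ := hK
  intro n s
  have hΔ : (fun x => -K (n + 1) (snoc s x) - -K n s) =
      fun x => H n s * (-M (n + 1) (snoc s x) - -M n s) := by
    funext x
    rw [hKH]
    ring
  show 0 ≤ Q n s (fun x => -K (n + 1) (snoc s x) - -K n s)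
  rw [hΔ, hQ n s _ _ (hH n s)]
  exact mul_nonneg (hH n s) (hM n s)

/-- `∑ⱼ 2^{-(j+1)} Kⱼ`, where `Kⱼ` joins at time `j` with value `1`: the strategies that have not
joined yet are counted at their total initial value `2^{-n}`. -/
noncomputable def mixture (K : ℕ → ∀ n, Sit 𝒳 n → ℝ) : ∀ n, Sit 𝒳 n → ℝ := fun n s =>
  ∑ j ∈ Finset.range n, (2⁻¹ : ℝ) ^ (j + 1) * K j n s + (2⁻¹ : ℝ) ^ n

theorem mixture_zero (K : ℕ → ∀ n, Sit 𝒳 n → ℝ) (s : Sit 𝒳 0) : mixture K 0 s = 1 := by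
  simp [mixture]

theorem mixture_nonneg {K : ℕ → ∀ n, Sit 𝒳 n → ℝ} (hK : ∀ j n s, 0 ≤ K j n s) (n : ℕ)
    (s : Sit 𝒳 n) : 0 ≤ mixture K n s :=
  add_nonneg (Finset.sum_nonneg fun j _ => mul_nonneg (by positivity) (hK j n s)) (by positivity)

theorem le_mixture {K : ℕ → ∀ n, Sit 𝒳 n → ℝ} (hK : ∀ j n s, 0 ≤ K j n s) {j n : ℕ}
    (hjn : j < n) (s : Sit 𝒳 n) : (2⁻¹ : ℝ) ^ (j + 1) * K j n s ≤ mixture K n s := by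
  have hsum := Finset.single_le_sum (f := fun i => (2⁻¹ : ℝ) ^ (i + 1) * K i n s)
    (fun i _ => mul_nonneg (by positivity) (hK i n s)) (Finset.mem_range.mpr hjn)
  have htail : (0 : ℝ) ≤ (2⁻¹ : ℝ) ^ n := by positivity
  unfold mixture
  linarith

theorem tendsto_mixture_atTop {K : ℕ → ∀ n, Sit 𝒳 n → ℝ} (hK : ∀ j n s, 0 ≤ K j n s)
    {ω : Path 𝒳} (j : ℕ) (h : Tendsto (fun n => K j n (res ω n)) atTop atTop) :
    Tendsto (fun n => mixture K n (res ω n)) atTop atTop :=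
  tendsto_atTop_mono' _ ((eventually_gt_atTop j).mono fun _ hjn => le_mixture hK hjn _)
    (h.const_mul_atTop (by positivity))

theorem IsNonnegTransform.mixture {M : ∀ n, Sit 𝒳 n → ℝ} {K : ℕ → ∀ n, Sit 𝒳 n → ℝ}
    (hK : ∀ j, IsNonnegTransform M (K j)) (hjoin : ∀ j s, K j j s = 1) :
    IsNonnegTransform M (mixture K) := by
  choose H hH hKH using hK
  refine ⟨fun n s => ∑ j ∈ Finset.range (n + 1), (2⁻¹ : ℝ) ^ (j + 1) * H j n s,
    fun n s => Finset.sum_nonneg fun j _ => mul_nonneg (by positivity) (hH j n s), ?_⟩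
  intro n s x
  simp only [IP.mixture, hKH, mul_add, Finset.sum_add_distrib, Finset.sum_mul, ← mul_assoc]
  rw [Finset.sum_range_succ (fun j => (2⁻¹ : ℝ) ^ (j + 1) * K j n s), hjoin]
  ring

/-- One step of the upcrossing strategy with floor `L`, levels `a < b` and start time `d`, on
reading the new price `u` after time `n`. The state is the wealth banked at the last entry or exit,
together with the price at which the running bet was entered, if a bet is running. -/
noncomputable def upcrossingStep (L a b : ℝ) (d n : ℕ) : ℝ × Option ℝ → ℝ → ℝ × Option ℝ
  | (W, none), u => if d ≤ n ∧ u ≤ a then (W, some u) else (W, none)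
  | (W, some v), u => if b ≤ u then (W * ((u - L) / (v - L)), none) else (W, some v)

/-- While a bet entered at price `v` runs, the wealth `W` is held as `W / (v - L)` units of the
asset `M - L`. -/
noncomputable def upcrossingCapital (L : ℝ) : ℝ × Option ℝ → ℝ → ℝ
  | (W, none), _ => W
  | (W, some v), u => W * ((u - L) / (v - L))

noncomputable def upcrossingStake (L : ℝ) : ℝ × Option ℝ → ℝ
  | (_, none) => 0
  | (W, some v) => W / (v - L)

def UpcrossingInv (L a : ℝ) (st : ℝ × Option ℝ) : Prop :=
  0 < st.1 ∧ ∀ v ∈ st.2, L < v ∧ v ≤ a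

section Step

variable {L a b u : ℝ} {d n : ℕ} {st : ℝ × Option ℝ}

theorem UpcrossingInv.step (h : UpcrossingInv L a st) (hu : L < u) :
    UpcrossingInv L a (upcrossingStep L a b d n st u) := by
  obtain ⟨W, _ | v⟩ := st <;> obtain ⟨hW, hv⟩ := h
  · simp only [upcrossingStep]
    split_ifs with hent
    · exact ⟨hW, by simp only [Option.mem_def, Option.some.injEq]; rintro _ rfl; exact ⟨hu, hent.2⟩⟩
    · exact ⟨hW, by simp⟩
  · obtain ⟨hLv, hva⟩ := hv v rfl
    simp only [upcrossingStep]
    split_ifs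
    · exact ⟨mul_pos hW (div_pos (by linarith) (by linarith)), by simp⟩
    · exact ⟨hW, hv⟩

theorem upcrossingCapital_step (u₀ : ℝ) (hu : L < u) :
    upcrossingCapital L (upcrossingStep L a b d n st u) u =
      upcrossingCapital L st u₀ + upcrossingStake L st * (u - u₀) := by
  obtain ⟨W, _ | v⟩ := st <;> simp only [upcrossingStep] <;> split_ifs <;>
    simp only [upcrossingCapital, upcrossingStake]
  · rw [div_self (sub_ne_zero.mpr hu.ne')]
    ring
  all_goals ring

theorem upcrossingStake_nonneg (h : UpcrossingInv L a st) : 0 ≤ upcrossingStake L st := by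
  obtain ⟨W, _ | v⟩ := st
  · exact le_rfl
  · exact div_nonneg h.1.le (sub_nonneg.mpr (h.2 v rfl).1.le)

theorem upcrossingCapital_nonneg (h : UpcrossingInv L a st) (hu : L ≤ u) :
    0 ≤ upcrossingCapital L st u := by
  obtain ⟨W, _ | v⟩ := st
  · exact h.1.le
  · exact mul_nonneg h.1.le (div_nonneg (sub_nonneg.mpr hu) (sub_nonneg.mpr (h.2 v rfl).1.le))

theorem mul_wealth_le_upcrossingCapital {B : ℝ} (h : UpcrossingInv L a st) (hLB : L < B)
    (hBu : B ≤ u) (hBa : B ≤ a) : (B - L) / (a - L) * st.1 ≤ upcrossingCapital L st u := by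
  obtain ⟨W, _ | v⟩ := st
  · have : (B - L) / (a - L) ≤ 1 := (div_le_one (by linarith)).mpr (by linarith)
    exact mul_le_of_le_one_left h.1.le this
  · obtain ⟨hLv, hva⟩ := h.2 v rfl
    rw [mul_comm]
    exact mul_le_mul_of_nonneg_left
      (div_le_div₀ (by linarith) (by linarith) (by linarith) (by linarith)) h.1.le

theorem wealth_le_upcrossingStep (h : UpcrossingInv L a st) (hab : a ≤ b) :
    st.1 ≤ (upcrossingStep L a b d n st u).1 := by
  obtain ⟨W, _ | v⟩ := st <;> simp only [upcrossingStep] <;> split_ifs with hbu <;> try exact le_rfl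
  obtain ⟨hLv, hva⟩ := h.2 v rfl
  exact le_mul_of_one_le_right h.1.le ((one_le_div (by linarith)).mpr (by linarith))

end Step

noncomputable def upcrossingRun (M : ∀ n, Sit 𝒳 n → ℝ) (L a b : ℝ) (d : ℕ) :
    ∀ n, Sit 𝒳 n → ℝ × Option ℝ
  | 0, _ => (1, none)
  | n + 1, s =>
      upcrossingStep L a b d n (upcrossingRun M L a b d n (trunc s n n.le_succ)) (M (n + 1) s)

section Run

variable {M : ∀ n, Sit 𝒳 n → ℝ} {L a b : ℝ} {d : ℕ}

theorem upcrossingRun_inv (hL : ∀ n s, L < M n s) :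
    ∀ n (s : Sit 𝒳 n), UpcrossingInv L a (upcrossingRun M L a b d n s)
  | 0, _ => ⟨one_pos, by simp [upcrossingRun]⟩
  | n + 1, s => (upcrossingRun_inv hL n _).step (hL (n + 1) s)

theorem upcrossingRun_of_le :
    ∀ n (s : Sit 𝒳 n), n ≤ d → upcrossingRun M L a b d n s = (1, none)
  | 0, _, _ => rfl
  | n + 1, s, hn => by
      rw [upcrossingRun, upcrossingRun_of_le n _ (by omega), upcrossingStep,
        if_neg (by omega)]

theorem isNonnegTransform_upcrossingCapital (hL : ∀ n s, L < M n s) :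
    IsNonnegTransform M fun n s => upcrossingCapital L (upcrossingRun M L a b d n s) (M n s) := by
  refine ⟨fun n s => upcrossingStake L (upcrossingRun M L a b d n s),
    fun n s => upcrossingStake_nonneg (upcrossingRun_inv hL n s), fun n s x => ?_⟩
  dsimp only
  rw [upcrossingRun, trunc_snoc]
  exact upcrossingCapital_step _ (hL _ _)

end Run

theorem exists_eq_and_succ_of_stays {σ : Type*} {f : ℕ → σ} {p : ℕ → Prop} {n m : ℕ}
    (hstay : ∀ k, n ≤ k → f k = f n → ¬ p (k + 1) → f (k + 1) = f n) (hnm : n < m) (hm : p m) :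
    ∃ k, n ≤ k ∧ f k = f n ∧ p (k + 1) := by
  by_contra! h
  have hconst : ∀ k, n ≤ k → f k = f n := by
    intro k hk
    induction k, hk using Nat.le_induction with
    | base => rfl
    | succ k hk ih => exact hstay k hk ih (h k hk ih)
  obtain ⟨k, rfl⟩ := Nat.exists_eq_add_of_lt hnm
  exact h (n + k) (by omega) (hconst _ (by omega)) hm

section Growth

variable {L a b : ℝ} {d : ℕ} {u : ℕ → ℝ} {st : ℕ → ℝ × Option ℝ}

theorem exists_exit_mul_wealth_le
    (hst : ∀ n, st (n + 1) = upcrossingStep L a b d n (st n) (u (n + 1)))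
    (hinv : ∀ n, UpcrossingInv L a (st n)) (hab : a < b) (hfb : ∃ᶠ n in atTop, b ≤ u n)
    {n : ℕ} {v : ℝ} (hn : (st n).2 = some v) :
    ∃ k, n < k ∧ (st k).2 = none ∧ (b - L) / (a - L) * (st n).1 ≤ (st k).1 := by
  obtain ⟨m, hnm, hm⟩ := (frequently_atTop.mp hfb) (n + 1)
  have hstay : ∀ k, n ≤ k → st k = st n → ¬ b ≤ u (k + 1) → st (k + 1) = st n := by
    intro k _ hk hbk
    rw [hst, hk, ← Prod.mk.eta (p := st n), hn, upcrossingStep, if_neg hbk]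
  obtain ⟨k, hnk, hk, hbk⟩ := exists_eq_and_succ_of_stays (p := fun i => b ≤ u i) hstay hnm hm
  have hexit : st (k + 1) = ((st n).1 * ((u (k + 1) - L) / (v - L)), none) := by
    rw [hst, hk, ← Prod.mk.eta (p := st n), hn, upcrossingStep, if_pos hbk]
  obtain ⟨hLv, hva⟩ := (hinv n).2 v hn
  refine ⟨k + 1, by omega, by rw [hexit], ?_⟩
  rw [hexit, mul_comm]
  exact mul_le_mul_of_nonneg_left
    (div_le_div₀ (by linarith) (by linarith) (by linarith) (by linarith)) (hinv n).1.le

theorem exists_mul_wealth_le (hst : ∀ n, st (n + 1) = upcrossingStep L a b d n (st n) (u (n + 1)))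
    (hinv : ∀ n, UpcrossingInv L a (st n)) (hab : a < b) (hfa : ∃ᶠ n in atTop, u n ≤ a)
    (hfb : ∃ᶠ n in atTop, b ≤ u n) {n : ℕ} (hdn : d ≤ n) :
    ∃ k, n < k ∧ (b - L) / (a - L) * (st n).1 ≤ (st k).1 := by
  rcases hn : (st n).2 with _ | v
  · obtain ⟨m, hnm, hm⟩ := (frequently_atTop.mp hfa) (n + 1)
    have hstay : ∀ k, n ≤ k → st k = st n → ¬ u (k + 1) ≤ a → st (k + 1) = st n := by
      intro k _ hk hak
      rw [hst, hk, ← Prod.mk.eta (p := st n), hn, upcrossingStep, if_neg (by tauto)]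
    obtain ⟨k, hnk, hk, hak⟩ := exists_eq_and_succ_of_stays (p := fun i => u i ≤ a) hstay hnm hm
    have hentry : st (k + 1) = ((st n).1, some (u (k + 1))) := by
      rw [hst, hk, ← Prod.mk.eta (p := st n), hn, upcrossingStep, if_pos ⟨by omega, hak⟩]
    obtain ⟨k', hk', -, hle⟩ :=
      exists_exit_mul_wealth_le hst hinv hab hfb (congrArg Prod.snd hentry)
    exact ⟨k', by omega, by simpa [hentry] using hle⟩
  · obtain ⟨k, hk, -, hle⟩ := exists_exit_mul_wealth_le hst hinv hab hfb hn
    exact ⟨k, hk, hle⟩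

theorem tendsto_wealth_atTop (hst : ∀ n, st (n + 1) = upcrossingStep L a b d n (st n) (u (n + 1)))
    (hinv : ∀ n, UpcrossingInv L a (st n)) (hLa : L < a) (hab : a < b)
    (hfa : ∃ᶠ n in atTop, u n ≤ a) (hfb : ∃ᶠ n in atTop, b ≤ u n) :
    Tendsto (fun n => (st n).1) atTop atTop := by
  set c := (b - L) / (a - L)
  have hc : 1 < c := (one_lt_div (by linarith)).mpr (by linarith)
  have hmono : Monotone fun n => (st n).1 := monotone_nat_of_le_succ fun n => by
    rw [hst]
    exact wealth_le_upcrossingStep (hinv n) hab.le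
  have hpow : ∀ i : ℕ, ∃ k, d ≤ k ∧ c ^ i * (st d).1 ≤ (st k).1 := by
    intro i
    induction i with
    | zero => exact ⟨d, le_rfl, by simp⟩
    | succ i ih =>
      obtain ⟨k, hdk, hk⟩ := ih
      obtain ⟨k', hkk', hk'⟩ := exists_mul_wealth_le hst hinv hab hfa hfb hdk
      refine ⟨k', by omega, ?_⟩
      calc c ^ (i + 1) * (st d).1 = c * (c ^ i * (st d).1) := by ring
        _ ≤ c * (st k).1 := by gcongr
        _ ≤ (st k').1 := hk'
  refine tendsto_atTop_atTop_of_monotone hmono fun R => ?_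
  obtain ⟨i, hi⟩ := pow_unbounded_of_one_lt (R / (st d).1) hc
  obtain ⟨k, -, hk⟩ := hpow i
  exact ⟨k, ((div_le_iff₀ (hinv d).1).mp hi.le).trans hk⟩

theorem tendsto_upcrossingCapital_atTop
    (hst : ∀ n, st (n + 1) = upcrossingStep L a b d n (st n) (u (n + 1)))
    (hinv : ∀ n, UpcrossingInv L a (st n)) {B : ℝ} (hLB : L < B) (hu : ∀ n, B ≤ u n)
    (hab : a < b) (hfa : ∃ᶠ n in atTop, u n ≤ a) (hfb : ∃ᶠ n in atTop, b ≤ u n) :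
    Tendsto (fun n => upcrossingCapital L (st n) (u n)) atTop atTop := by
  obtain ⟨m, hm⟩ := hfa.exists
  have hBa : B ≤ a := (hu m).trans hm
  exact tendsto_atTop_mono (fun n => mul_wealth_le_upcrossingCapital (hinv n) hLB (hu n) hBa)
    ((tendsto_wealth_atTop hst hinv (by linarith) hab hfa hfb).const_mul_atTop
      (div_pos (by linarith) (by linarith)))

end Growth

theorem exists_rat_frequently_lt_frequently_gt {u : ℕ → ℝ} (hu : BddBelow (Set.range u))
    (hconv : ¬ ∃ c, Tendsto u atTop (𝓝 c)) (htop : ¬ Tendsto u atTop atTop) :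
    ∃ a b : ℚ, a < b ∧ (∃ᶠ n in atTop, u n < a) ∧ ∃ᶠ n in atTop, (b : ℝ) < u n := by
  by_contra! H
  obtain ⟨c, hc⟩ : ∃ c, ∃ᶠ n in atTop, u n < c := by
    by_contra! h
    exact htop (tendsto_atTop.mpr h)
  obtain ⟨a, hca⟩ := exists_rat_gt c
  have hbdd : IsBoundedUnder (· ≤ ·) atTop u :=
    isBoundedUnder_of_eventually_le (H a (a + 1) (by linarith) (hc.mono fun _ h => h.trans hca))
  refine hconv (tendsto_of_no_upcrossings Rat.denseRange_cast ?_ hbdd hu.isBoundedUnder_of_range)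
  rintro _ ⟨a, rfl⟩ _ ⟨b, rfl⟩ hab ⟨hfa, hfb⟩
  obtain ⟨n, hbn, hnb⟩ := (hfb.and_eventually (H a b (Rat.cast_lt.mp hab) hfa)).exists
  exact hbn.not_ge hnb

/-- Strategy `j + 1` plays the upcrossing strategy for the `j`-th pair of rationals, started late
enough to join `mixture` with value `1`. -/
noncomputable def convergenceStrategy (M : ∀ n, Sit 𝒳 n → ℝ) (L : ℝ) : ℕ → ∀ n, Sit 𝒳 n → ℝ
  | 0 => fun n s => (M n s - L) / (M 0 emptySit - L)
  | j + 1 => fun n s => upcrossingCapital L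
      (upcrossingRun M L (Denumerable.ofNat (ℚ × ℚ) j).1 (Denumerable.ofNat (ℚ × ℚ) j).2 (j + 1)
        n s) (M n s)

section Strategy

variable {M : ∀ n, Sit 𝒳 n → ℝ} {L : ℝ}

theorem isNonnegTransform_convergenceStrategy (hL : ∀ n s, L < M n s) :
    ∀ j, IsNonnegTransform M (convergenceStrategy M L j)
  | 0 => ⟨fun _ _ => (M 0 emptySit - L)⁻¹, fun _ _ => inv_nonneg.mpr (by linarith [hL 0 emptySit]),
      fun n s x => by simp only [convergenceStrategy]; ring⟩
  | _ + 1 => isNonnegTransform_upcrossingCapital hL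

theorem convergenceStrategy_nonneg (hL : ∀ n s, L < M n s) :
    ∀ j n s, 0 ≤ convergenceStrategy M L j n s
  | 0, n, s => div_nonneg (by linarith [hL n s]) (by linarith [hL 0 emptySit])
  | _ + 1, n, s => upcrossingCapital_nonneg (upcrossingRun_inv hL n s) (hL n s).le

theorem convergenceStrategy_self (hL : ∀ n s, L < M n s) :
    ∀ j (s : Sit 𝒳 j), convergenceStrategy M L j j s = 1
  | 0, s => by
      rw [Subsingleton.elim s emptySit]
      exact div_self (by linarith [hL 0 emptySit])
  | j + 1, s => by simp only [convergenceStrategy, upcrossingRun_of_le (j + 1) s le_rfl,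
      upcrossingCapital]

end Strategy

end Convergence


/-- Supermartingale convergence theorem. -/
theorem supermartingale_convergence {𝒳 : ℕ → Type} [∀ n, Fintype (𝒳 n)] [∀ n, Nonempty (𝒳 n)]
    (Q : ∀ n, Sit 𝒳 n → (𝒳 n → ℝ) → ℝ) (hQ : ∀ n s, IsLE (Q n s))
    (M : ∀ n, Sit 𝒳 n → ℝ) (hM : IsSupermartingale Q M)
    (B : ℝ) (hB : ∀ (n : ℕ) (s : Sit 𝒳 n), B ≤ M n s) :
    StrictlyNull Q
      {ω : Path 𝒳 | ¬ ∃ L : ℝ, Tendsto (fun n : ℕ => M n (res ω n)) atTop (nhds L)} := by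
  have hL : ∀ n s, B - 1 < M n s := fun n s => by linarith [hB n s]
  have hK := convergenceStrategy_nonneg hL
  refine ⟨mixture (convergenceStrategy M (B - 1)),
    ⟨(IsNonnegTransform.mixture (isNonnegTransform_convergenceStrategy hL)
      (convergenceStrategy_self hL)).isSupermartingale (fun n s => (hQ n s).2.2) hM,
    mixture_nonneg hK, mixture_zero _ _⟩, fun ω hω => ?_⟩
  have hbdd : BddBelow (Set.range fun n => M n (res ω n)) := ⟨B, by rintro _ ⟨n, rfl⟩; exact hB n _⟩
  by_cases htop : Tendsto (fun n => M n (res ω n)) atTop atTop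
  · exact tendsto_mixture_atTop hK 0
      ((tendsto_atTop_add_const_right _ _ htop).atTop_div_const (by linarith [hL 0 emptySit]))
  obtain ⟨a, b, hab, hfa, hfb⟩ := exists_rat_frequently_lt_frequently_gt hbdd hω htop
  obtain ⟨j, hj⟩ : ∃ j, Denumerable.ofNat (ℚ × ℚ) j = (a, b) := ⟨_, Denumerable.ofNat_encode _⟩
  refine tendsto_mixture_atTop hK (j + 1) ?_
  simp only [convergenceStrategy, hj]
  exact tendsto_upcrossingCapital_atTop (fun n => rfl)
    (fun n => upcrossingRun_inv hL n _) (by linarith : B - 1 < B) (fun n => hB n _)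
    (Rat.cast_lt.mpr hab) (hfa.mono fun _ h => h.le) (hfb.mono fun _ h => h.le)

end IP
end

section
/- (Stationarity.) Consider an imprecise Markov chain with initial model E_1 := Q(·|□) and lower transition operator T, and assume T is Perron–Frobenius-like with stationary lower expectation E_∞. Call the chain stationary if E(f) = E(θf) for every extended real variable f : Ω → ℝ ∪ {−∞,+∞}, where (θf)(ω) := f(θω) and θω := (ω_2, ω_3, …) is the shifted path. Then the chain is stationary if and only if E_1(h) = E_∞(h) for every h : 𝒳 → ℝ. -/
/-!
By the law of iterated lower expectations, `E(f) = E₁(E(f | ·))`, conditioning on the first state.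
For a Markov chain `E(θf | x, y) = E(f | y)`, so a second application gives
`E(θf) = E₁(T E(f | ·))`, with `T` extended to extended real maps. If `E₁ = E∞` then
`E₁ ∘ T = E₁`, because `E∞` is the limit of the iterates `Tⁿ`, and this invariance survives the
extension, so `E(θf) = E(f)`. Conversely, stationarity for `f(ω) = h(ω₁)` gives
`E₁(Th) = E₁(h)`, hence `E₁(h) = E₁(Tⁿh) → E∞(h)`.
-/

open Filter Topology

namespace IP

namespace IsLE

variable {Y : Type} [Fintype Y] [Nonempty Y] {E : (Y → ℝ) → ℝ}

lemma map_zero (hE : IsLE E) : E (fun _ => 0) = 0 := by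
  simpa using hE.2.2 (fun _ => 0) 0 le_rfl

lemma nonneg (hE : IsLE E) {f : Y → ℝ} (hf : ∀ y, 0 ≤ f y) : 0 ≤ E f :=
  (le_ciInf hf).trans (hE.1 f)

lemma mono (hE : IsLE E) {f g : Y → ℝ} (hfg : ∀ y, f y ≤ g y) : E f ≤ E g := by
  have h := hE.2.1 f (fun y => g y - f y)
  have h' := hE.nonneg (f := fun y => g y - f y) (fun y => sub_nonneg.2 (hfg y))
  simp only [add_sub_cancel] at h
  linarith

lemma map_const (hE : IsLE E) (c : ℝ) : E (fun _ => c) = c := by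
  have hc := hE.1 (fun _ => c)
  have hc' := hE.1 (fun _ => -c)
  have hsum := hE.2.1 (fun _ => c) (fun _ => -c)
  simp only [ciInf_const, add_neg_cancel, hE.map_zero] at hc hc' hsum
  linarith

lemma map_add_const (hE : IsLE E) (f : Y → ℝ) (c : ℝ) : E (fun y => f y + c) = E f + c := by
  have h₁ := hE.2.1 f (fun _ => c)
  have h₂ := hE.2.1 (fun y => f y + c) (fun _ => -c)
  simp only [add_neg_cancel_right, hE.map_const] at h₁ h₂
  linarith

lemma step_nonneg_of_eq (hE : IsLE E) {g : Y → ℝ} {a : ℝ} (hg : ∀ y, g y = a) :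
    0 ≤ E (fun y => g y - a) := by
  simp only [hg, sub_self, hE.map_zero, le_refl]

lemma exists_le_apply (hE : IsLE E) (f : Y → ℝ) : ∃ y, E f ≤ f y := by
  obtain ⟨y, hy⟩ := Finite.exists_max f
  exact ⟨y, (hE.mono hy).trans (hE.map_const _).le⟩

lemma exists_apply_le (hE : IsLE E) (f : Y → ℝ) : ∃ y, f y ≤ E f := by
  obtain ⟨y, hy⟩ := exists_eq_ciInf_of_finite (f := f)
  exact ⟨y, hy ▸ hE.1 f⟩

lemma tendsto_of_forall_tendsto (hE : IsLE E) {ι : Type} {l : Filter ι} {u : ι → Y → ℝ} {c : ℝ}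
    (hu : ∀ y, Tendsto (fun i => u i y) l (𝓝 c)) : Tendsto (fun i => E (u i)) l (𝓝 c) := by
  refine tendsto_order.2 ⟨fun a ha => ?_, fun b hb => ?_⟩
  · filter_upwards [eventually_all.2 fun y => (tendsto_order.1 (hu y)).1 a ha] with i hi
    obtain ⟨y, hy⟩ := hE.exists_apply_le (u i)
    exact (hi y).trans_le hy
  · filter_upwards [eventually_all.2 fun y => (tendsto_order.1 (hu y)).2 b hb] with i hi
    obtain ⟨y, hy⟩ := hE.exists_le_apply (u i)
    exact hy.trans_lt (hi y)

end IsLE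

noncomputable def lowerExt {Y : Type} (E : (Y → ℝ) → ℝ) (g : Y → EReal) : EReal :=
  sSup ((fun h : Y → ℝ => (E h : EReal)) '' {h : Y → ℝ | ∀ y, (h y : EReal) ≤ g y})

section lowerExt

variable {Y : Type} {E : (Y → ℝ) → ℝ}

lemma le_lowerExt {g : Y → EReal} {h : Y → ℝ} (hh : ∀ y, (h y : EReal) ≤ g y) :
    (E h : EReal) ≤ lowerExt E g :=
  le_sSup ⟨h, hh, rfl⟩

lemma lowerExt_le {g : Y → EReal} {b : EReal}
    (hb : ∀ h : Y → ℝ, (∀ y, (h y : EReal) ≤ g y) → (E h : EReal) ≤ b) : lowerExt E g ≤ b :=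
  sSup_le <| by rintro _ ⟨h, hh, rfl⟩; exact hb h hh

lemma lowerExt_coe [Fintype Y] [Nonempty Y] (hE : IsLE E) (g : Y → ℝ) :
    lowerExt E (fun y => (g y : EReal)) = E g :=
  le_antisymm
    (lowerExt_le fun _ hh =>
      EReal.coe_le_coe_iff.2 (hE.mono fun y => EReal.coe_le_coe_iff.1 (hh y)))
    (le_lowerExt fun _ => le_rfl)

end lowerExt

section Text

variable {X : Type} [Fintype X] [Nonempty X] {T : (X → ℝ) → X → ℝ}

/-- For `≤`, near-optimal real minorants of `g`, one for each state, are combined by a finite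
maximum. -/
lemma lowerExt_Text_of_invariant {E₁ : (X → ℝ) → ℝ} (hE₁ : IsLE E₁)
    (hT : ∀ x, IsLE (fun h => T h x)) (hinv : ∀ h, E₁ (T h) = E₁ h) (g : X → EReal) :
    lowerExt E₁ (Text T g) = lowerExt E₁ g := by
  refine le_antisymm (lowerExt_le fun k hk => ?_) (lowerExt_le fun h hh => ?_)
  · refine EReal.ge_of_forall_gt_iff_ge.1 fun z hz => ?_
    have hz' : z < E₁ k := EReal.coe_lt_coe_iff.1 hz
    have hnear : ∀ x, ∃ h : X → ℝ, (∀ y, (h y : EReal) ≤ g y) ∧ k x - (E₁ k - z) < T h x := by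
      intro x
      have : ((k x - (E₁ k - z) : ℝ) : EReal) < Text T g x :=
        (EReal.coe_lt_coe_iff.2 (by linarith)).trans_le (hk x)
      obtain ⟨_, ⟨h, hh, rfl⟩, hlt⟩ := lt_sSup_iff.1 this
      exact ⟨h, hh, EReal.coe_lt_coe_iff.1 hlt⟩
    choose hpick hpick_le hpick_lt using hnear
    let H : X → ℝ := Finset.univ.sup' Finset.univ_nonempty hpick
    have hHg : ∀ y, (H y : EReal) ≤ g y := by
      intro y
      obtain ⟨x, -, hx⟩ := Finset.exists_mem_eq_sup' Finset.univ_nonempty (fun x => hpick x y)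
      simp only [H, Finset.sup'_apply, hx]
      exact hpick_le x y
    have hTH : ∀ x, k x + -(E₁ k - z) ≤ T H x := fun x =>
      (hpick_lt x).le.trans ((hT x).mono fun y => Finset.le_sup' hpick (Finset.mem_univ x) y)
    have : z ≤ E₁ H := by
      have := hE₁.mono hTH
      rw [hE₁.map_add_const, hinv] at this
      linarith
    exact (EReal.coe_le_coe_iff.2 this).trans (le_lowerExt hHg)
  · rw [← hinv]
    exact le_lowerExt fun x => le_lowerExt (E := fun h => T h x) hh

end Text

section Situations

variable {X : Type}

lemma snoc_eq_finSnoc {n : ℕ} (s : Sit (fun _ => X) n) (x : X) : snoc s x = Fin.snoc s x := by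
  funext i
  simp only [snoc, Fin.snoc]
  split <;> rfl

lemma res_succ (ω : Path (fun _ => X)) (n : ℕ) : res ω (n + 1) = snoc (res ω n) (ω n) := by
  rw [snoc_eq_finSnoc]
  funext i
  refine Fin.lastCases ?_ (fun j => ?_) i
  · simp [res]
  · simp [res]

lemma trunc_snoc_s7 {k n : ℕ} (t : Sit (fun _ => X) k) (x : X) (h : n ≤ k) :
    trunc (snoc t x) n (h.trans k.le_succ) = trunc t n h := by
  funext i
  simp [trunc, snoc, lt_of_lt_of_le i.isLt h]

lemma trunc_snoc_self {k : ℕ} (t : Sit (fun _ => X) k) (x : X) :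
    trunc (snoc t x) k k.le_succ = t :=
  trunc_snoc_s7 t x le_rfl

lemma snoc_apply_of_lt {k i : ℕ} (t : Sit (fun _ => X) k) (x : X) (h : i < k) :
    snoc t x ⟨i, h.trans k.lt_succ_self⟩ = t ⟨i, h⟩ :=
  dif_pos h

lemma snoc_apply_self {k : ℕ} (t : Sit (fun _ => X) k) (x : X) :
    snoc t x ⟨k, k.lt_succ_self⟩ = x := by
  rw [snoc_eq_finSnoc]
  exact Fin.snoc_last (α := fun _ => X) x t

end Situations

section Minorant

variable {𝒳 : ℕ → Type} (Q : ∀ n, Sit 𝒳 n → (𝒳 n → ℝ) → ℝ)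

def IsMinorant {n : ℕ} (s : Sit 𝒳 n) (f : Path 𝒳 → EReal) (F : ∀ k, Sit 𝒳 k → ℝ) : Prop :=
  IsSubmartingale Q F ∧ BddAbv F ∧ ∀ ω : Path 𝒳, res ω n = s → pathLimsup F ω ≤ f ω

variable {Q} {n : ℕ} {s : Sit 𝒳 n} {f : Path 𝒳 → EReal}

lemma le_lexp {F : ∀ k, Sit 𝒳 k → ℝ} (hF : IsMinorant Q s f F) : (F n s : EReal) ≤ lexp Q s f :=
  le_sSup ⟨F, hF, rfl⟩

lemma lexp_le {b : EReal} (hb : ∀ F, IsMinorant Q s f F → (F n s : EReal) ≤ b) :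
    lexp Q s f ≤ b :=
  sSup_le <| by rintro _ ⟨F, hF, rfl⟩; exact hb F hF

end Minorant

section GreedyPath

variable {X : Type}

def greedyPath {n : ℕ} (s : Sit (fun _ => X) n) (pick : ∀ k, Sit (fun _ => X) k → X) :
    Path (fun _ => X)
  | i => if h : i < n then s ⟨i, h⟩ else pick i (fun j => greedyPath s pick j)

variable {n : ℕ} (s : Sit (fun _ => X) n) (pick : ∀ k, Sit (fun _ => X) k → X)

lemma res_greedyPath : res (greedyPath s pick) n = s := by
  funext i
  rw [res, greedyPath, dif_pos i.isLt]

lemma greedyPath_of_le {k : ℕ} (hk : n ≤ k) :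
    greedyPath s pick k = pick k (res (greedyPath s pick) k) := by
  rw [greedyPath, dif_neg (not_lt.2 hk)]
  rfl

end GreedyPath

section Tree

variable {X : Type} [Fintype X] [Nonempty X] {Q : ∀ n, Sit (fun _ => X) n → (X → ℝ) → ℝ}
  {F : ∀ n, Sit (fun _ => X) n → ℝ}

lemma IsSubmartingale.le_apply_snoc (hQ : ∀ n s, IsLE (Q n s)) (hF : IsSubmartingale Q F)
    {n : ℕ} (s : Sit (fun _ => X) n) : F n s ≤ Q n s (fun x => F (n + 1) (snoc s x)) := by
  have := hF n s
  simp only [sub_eq_add_neg, (hQ n s).map_add_const] at this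
  linarith

lemma isSubmartingale_const (hQ : ∀ n s, IsLE (Q n s)) (c : ℝ) :
    IsSubmartingale Q (fun _ _ => c) := fun n s => by
  simp only [sub_self, (hQ n s).map_zero, le_refl]

/-- `F` does not decrease along the path that always moves to a state where the increment of `F`
is at least its local lower expectation, which is nonnegative. -/
lemma IsSubmartingale.exists_path_le_pathLimsup (hQ : ∀ n s, IsLE (Q n s))
    (hF : IsSubmartingale Q F) {n : ℕ} (s : Sit (fun _ => X) n) :
    ∃ ω : Path (fun _ => X), res ω n = s ∧ (F n s : EReal) ≤ pathLimsup F ω := by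
  have hstep : ∀ k (t : Sit (fun _ => X) k), ∃ x, F k t ≤ F (k + 1) (snoc t x) := fun k t => by
    obtain ⟨x, hx⟩ := (hQ k t).exists_le_apply (fun x => F (k + 1) (snoc t x) - F k t)
    exact ⟨x, sub_nonneg.1 ((hF k t).trans hx)⟩
  choose pick hpick using hstep
  have hmono : ∀ k, n ≤ k → F n s ≤ F k (res (greedyPath s pick) k) := by
    intro k hk
    induction k, hk using Nat.le_induction with
    | base => rw [res_greedyPath]
    | succ k hk ih => rw [res_succ, greedyPath_of_le s pick hk]; exact ih.trans (hpick _ _)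
  refine ⟨greedyPath s pick, res_greedyPath s pick, le_limsup_of_frequently_le' ?_⟩
  exact (eventually_atTop.2 ⟨n, fun k hk => EReal.coe_le_coe_iff.2 (hmono k hk)⟩).frequently

lemma lexp_of_eqOn_cylinder (hQ : ∀ n s, IsLE (Q n s)) {n : ℕ} {s : Sit (fun _ => X) n}
    {f : Path (fun _ => X) → EReal} {c : ℝ} (hf : ∀ ω, res ω n = s → f ω = c) :
    lexp Q s f = c := by
  refine le_antisymm (lexp_le fun F ⟨hF, _, hFf⟩ => ?_) (le_lexp (F := fun _ _ => c) ?_)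
  · obtain ⟨ω, hω, hle⟩ := hF.exists_path_le_pathLimsup hQ s
    exact hle.trans ((hFf ω hω).trans (hf ω hω).le)
  · refine ⟨isSubmartingale_const hQ c, ⟨c, fun _ _ => le_rfl⟩, fun ω hω => ?_⟩
    rw [hf ω hω, pathLimsup, limsup_const]

end Tree

section Paste

variable {X : Type} {Q : ∀ n, Sit (fun _ => X) n → (X → ℝ) → ℝ}
  {n : ℕ} {s : Sit (fun _ => X) n} {c : ℝ} {F : X → ∀ k, Sit (fun _ => X) k → ℝ}

open Classical in
noncomputable def paste (s : Sit (fun _ => X) n) (c : ℝ) (F : X → ∀ k, Sit (fun _ => X) k → ℝ) :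
    ∀ k, Sit (fun _ => X) k → ℝ :=
  fun k t => if hk : n < k then if trunc t n hk.le = s then F (t ⟨n, hk⟩) k t else c else c

lemma paste_of_le {k : ℕ} (hk : k ≤ n) (t : Sit (fun _ => X) k) : paste s c F k t = c :=
  dif_neg (not_lt.2 hk)

lemma paste_of_trunc_eq {k : ℕ} (hk : n < k) {t : Sit (fun _ => X) k}
    (ht : trunc t n hk.le = s) : paste s c F k t = F (t ⟨n, hk⟩) k t := by
  rw [paste, dif_pos hk, if_pos ht]

lemma paste_of_trunc_ne {k : ℕ} (hk : n < k) {t : Sit (fun _ => X) k}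
    (ht : trunc t n hk.le ≠ s) : paste s c F k t = c := by
  rw [paste, dif_pos hk, if_neg ht]

lemma pathLimsup_paste {ω : Path (fun _ => X)} (hω : res ω n = s) :
    pathLimsup (paste s c F) ω = pathLimsup (F (ω n)) ω := by
  refine limsup_congr (eventually_atTop.2 ⟨n + 1, fun k hk => ?_⟩)
  rw [paste_of_trunc_eq (t := res ω k) (by omega) hω]
  rfl

lemma IsMinorant.of_snoc {f : Path (fun _ => X) → EReal} {G : ∀ k, Sit (fun _ => X) k → ℝ}
    (hG : IsMinorant Q s f G) (x : X) : IsMinorant Q (snoc s x) f G := by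
  refine ⟨hG.1, hG.2.1, fun ω hω => hG.2.2 ω ?_⟩
  rw [← trunc_snoc_self s x, ← hω]
  rfl

end Paste

section PasteTree

variable {X : Type} [Fintype X] [Nonempty X] {Q : ∀ n, Sit (fun _ => X) n → (X → ℝ) → ℝ}
  {n : ℕ} {s : Sit (fun _ => X) n} {c : ℝ} {F : X → ∀ k, Sit (fun _ => X) k → ℝ}

lemma paste_isSubmartingale (hQ : ∀ n s, IsLE (Q n s)) (hF : ∀ x, IsSubmartingale Q (F x))
    (hc : 0 ≤ Q n s (fun x => F x (n + 1) (snoc s x) - c)) :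
    IsSubmartingale Q (paste s c F) := by
  intro k t
  rcases lt_trichotomy k n with hkn | rfl | hkn
  · rw [paste_of_le hkn.le]
    exact (hQ k t).step_nonneg_of_eq fun x => paste_of_le hkn _
  · rw [paste_of_le le_rfl]
    by_cases ht : t = s
    · subst ht
      simpa only [paste_of_trunc_eq k.lt_succ_self (trunc_snoc_self t _), snoc_apply_self]
        using hc
    · refine (hQ k t).step_nonneg_of_eq fun x => paste_of_trunc_ne k.lt_succ_self ?_
      rwa [trunc_snoc_self]
  · by_cases ht : trunc t n hkn.le = s
    · have ht' : ∀ x, trunc (snoc t x) n (hkn.le.trans k.le_succ) = s := fun x => by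
        rwa [trunc_snoc_s7]
      rw [paste_of_trunc_eq hkn ht]
      simp only [paste_of_trunc_eq (hkn.trans k.lt_succ_self) (ht' _), snoc_apply_of_lt t _ hkn]
      exact hF _ k t
    · have ht' : ∀ x, trunc (snoc t x) n (hkn.le.trans k.le_succ) ≠ s := fun x => by
        rwa [trunc_snoc_s7]
      rw [paste_of_trunc_ne hkn ht]
      exact (hQ k t).step_nonneg_of_eq fun x =>
        paste_of_trunc_ne (hkn.trans k.lt_succ_self) (ht' x)

lemma paste_bddAbv (hF : ∀ x, BddAbv (F x)) : BddAbv (paste s c F) := by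
  choose B hB using hF
  refine ⟨max c (Finset.univ.sup' Finset.univ_nonempty B), fun k t => ?_⟩
  by_cases hk : n < k
  · by_cases ht : trunc t n hk.le = s
    · rw [paste_of_trunc_eq hk ht]
      exact le_max_of_le_right ((hB _ k t).trans (Finset.le_sup' B (Finset.mem_univ _)))
    · rw [paste_of_trunc_ne hk ht]
      exact le_max_left _ _
  · rw [paste_of_le (not_lt.1 hk)]
    exact le_max_left _ _

lemma IsMinorant.paste (hQ : ∀ n s, IsLE (Q n s)) {f : Path (fun _ => X) → EReal}
    (hF : ∀ x, IsMinorant Q (snoc s x) f (F x))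
    (hc : 0 ≤ Q n s (fun x => F x (n + 1) (snoc s x) - c)) :
    IsMinorant Q s f (paste s c F) := by
  refine ⟨paste_isSubmartingale hQ (fun x => (hF x).1) hc, paste_bddAbv fun x => (hF x).2.1,
    fun ω hω => ?_⟩
  rw [pathLimsup_paste hω]
  exact (hF (ω n)).2.2 ω (by rw [res_succ, hω])

end PasteTree

section IteratedExpectation

variable {X : Type} [Fintype X] [Nonempty X] {Q : ∀ n, Sit (fun _ => X) n → (X → ℝ) → ℝ}

/-- Law of iterated lower expectations. For `≥`, near-optimal minorants in the subtrees of the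
situations `snoc s x` are pasted together below the value `z < Q n s h`. -/
lemma lexp_eq_lowerExt (hQ : ∀ n s, IsLE (Q n s)) {n : ℕ} (s : Sit (fun _ => X) n)
    (f : Path (fun _ => X) → EReal) :
    lexp Q s f = lowerExt (Q n s) (fun x => lexp Q (snoc s x) f) := by
  refine le_antisymm (lexp_le fun G hG => ?_) (lowerExt_le fun h hh => ?_)
  · exact (EReal.coe_le_coe_iff.2 (hG.1.le_apply_snoc hQ s)).trans
      (le_lowerExt fun x => le_lexp (hG.of_snoc x))
  · refine EReal.ge_of_forall_gt_iff_ge.1 fun z hz => ?_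
    have hz' : z < Q n s h := EReal.coe_lt_coe_iff.1 hz
    have hnear : ∀ x, ∃ F : ∀ k, Sit (fun _ => X) k → ℝ, IsMinorant Q (snoc s x) f F ∧
        h x - (Q n s h - z) < F (n + 1) (snoc s x) := by
      intro x
      have : ((h x - (Q n s h - z) : ℝ) : EReal) < lexp Q (snoc s x) f :=
        (EReal.coe_lt_coe_iff.2 (by linarith)).trans_le (hh x)
      obtain ⟨_, ⟨F, hF, rfl⟩, hlt⟩ := lt_sSup_iff.1 this
      exact ⟨F, hF, EReal.coe_lt_coe_iff.1 hlt⟩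
    choose F hF hFlt using hnear
    have hc : 0 ≤ Q n s (fun x => F x (n + 1) (snoc s x) - z) := by
      have := (hQ n s).mono (f := fun x => h x + -Q n s h)
        (g := fun x => F x (n + 1) (snoc s x) - z) fun x => by linarith [hFlt x]
      rwa [(hQ n s).map_add_const, add_neg_cancel] at this
    simpa only [paste_of_le le_rfl] using le_lexp (IsMinorant.paste hQ hF hc)

end IteratedExpectation

section MarkovShift

variable {X : Type}

def consPath (x : X) (ω : Path (fun _ => X)) : Path (fun _ => X)
  | 0 => x
  | i + 1 => ω i

def consSit {n : ℕ} (x : X) (t : Sit (fun _ => X) n) : Sit (fun _ => X) (n + 1) :=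
  Fin.cons x t

def tailSit {n : ℕ} (t : Sit (fun _ => X) (n + 1)) : Sit (fun _ => X) n :=
  Fin.tail t

lemma res_consPath (x : X) (ω : Path (fun _ => X)) (k : ℕ) :
    res (consPath x ω) (k + 1) = consSit x (res ω k) := by
  funext i
  cases i using Fin.cases <;> rfl

lemma consSit_snoc {k : ℕ} (x : X) (t : Sit (fun _ => X) k) (z : X) :
    consSit x (snoc t z) = snoc (consSit x t) z := by
  simp only [consSit, snoc_eq_finSnoc]
  exact Fin.cons_snoc_eq_snoc_cons x t z

lemma consSit_emptySit (x : X) : consSit x emptySit = snoc emptySit x := by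
  rw [snoc_eq_finSnoc]
  funext i
  fin_cases i
  rfl

lemma tailSit_consSit {k : ℕ} (x : X) (t : Sit (fun _ => X) k) : tailSit (consSit x t) = t :=
  rfl

lemma tailSit_snoc {k : ℕ} (t : Sit (fun _ => X) (k + 1)) (z : X) :
    tailSit (snoc t z) = snoc (tailSit t) z := by
  have hcons : consSit (t 0) (tailSit t) = t := Fin.cons_self_tail t
  conv_lhs => rw [← hcons, ← consSit_snoc, tailSit_consSit]

lemma pathLimsup_eq_of_succ {F G : ∀ k, Sit (fun _ => X) k → ℝ} {ω ω' : Path (fun _ => X)}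
    (h : ∀ k, F (k + 1) (res ω (k + 1)) = G (k + 2) (res ω' (k + 2))) :
    pathLimsup F ω = pathLimsup G ω' := by
  rw [pathLimsup, pathLimsup, ← limsup_nat_add (fun k => (F k (res ω k) : EReal)) 1,
    ← limsup_nat_add (fun k => (G k (res ω' k) : EReal)) 2]
  simp only [h]

variable [Fintype X] [Nonempty X] {E₁ : (X → ℝ) → ℝ} {QT : X → (X → ℝ) → ℝ}

lemma markovQ_isLE (hE₁ : IsLE E₁) (hQT : ∀ x, IsLE (QT x)) :
    ∀ n s, IsLE (markovQ E₁ QT n s)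
  | 0, _ => hE₁
  | _ + 1, _ => hQT _

/-- `G` moved one step back in time; at `□` any lower bound of its next values will do. -/
noncomputable def consProc (x : X) (G : ∀ k, Sit (fun _ => X) k → ℝ) :
    ∀ k, Sit (fun _ => X) k → ℝ
  | 0, _ => ⨅ z, G 2 (consSit x (snoc emptySit z))
  | k + 1, t => G (k + 2) (consSit x t)

/-- `F` moved one step forward in time; up to time `1` any lower bound of its values at time `1`
will do. -/
noncomputable def tailProc (F : ∀ k, Sit (fun _ => X) k → ℝ) : ∀ k, Sit (fun _ => X) k → ℝ
  | 0, _ => ⨅ z, F 1 (snoc emptySit z)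
  | 1, _ => ⨅ z, F 1 (snoc emptySit z)
  | k + 2, t => F (k + 1) (tailSit t)

lemma isMinorant_consProc (hE₁ : IsLE E₁) {n : ℕ} {x : X}
    {t : Sit (fun _ => X) (n + 1)} {f : Path (fun _ => X) → EReal}
    {G : ∀ k, Sit (fun _ => X) k → ℝ}
    (hG : IsMinorant (markovQ E₁ QT) (consSit x t) (fun ω => f (fun i => ω (i + 1))) G) :
    IsMinorant (markovQ E₁ QT) t f (consProc x G) := by
  obtain ⟨hGsub, ⟨B, hB⟩, hGf⟩ := hG
  refine ⟨fun k s => ?_, ⟨max B (consProc x G 0 emptySit), fun k s => ?_⟩, fun ω hω => ?_⟩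
  · cases k with
    | zero =>
      obtain rfl := Subsingleton.elim s emptySit
      refine hE₁.nonneg fun z => sub_nonneg.2 ?_
      exact ciInf_le (f := fun z => G 2 (consSit x (snoc emptySit z)))
        (Set.finite_range _).bddBelow z
    | succ k =>
      have := hGsub (k + 2) (consSit x s)
      simp only [← consSit_snoc] at this
      exact this
  · cases k with
    | zero => exact (Subsingleton.elim s emptySit) ▸ le_max_right _ _
    | succ k => exact le_max_of_le_left (hB _ _)
  · have hlim : pathLimsup (consProc x G) ω = pathLimsup G (consPath x ω) :=
      pathLimsup_eq_of_succ fun k => by simp only [consProc, res_consPath]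
    rw [hlim]
    exact hGf _ (by rw [res_consPath, hω])

lemma isMinorant_tailProc (hE₁ : IsLE E₁) (hQT : ∀ x, IsLE (QT x)) {n : ℕ} {x : X}
    {t : Sit (fun _ => X) (n + 1)} {f : Path (fun _ => X) → EReal}
    {F : ∀ k, Sit (fun _ => X) k → ℝ} (hF : IsMinorant (markovQ E₁ QT) t f F) :
    IsMinorant (markovQ E₁ QT) (consSit x t)
      (fun ω => f (fun i => ω (i + 1))) (tailProc F) := by
  obtain ⟨hFsub, ⟨B, hB⟩, hFf⟩ := hF
  refine ⟨fun k s => ?_, ⟨max B (tailProc F 0 emptySit), fun k s => ?_⟩, fun ω hω => ?_⟩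
  · match k with
    | 0 => exact hE₁.step_nonneg_of_eq fun _ => rfl
    | 1 =>
      refine (hQT _).nonneg fun z => sub_nonneg.2 ?_
      simp only [tailProc, tailSit_snoc, Subsingleton.elim (tailSit s) emptySit]
      exact ciInf_le (Set.finite_range _).bddBelow z
    | k + 2 =>
      have := hFsub (k + 1) (tailSit s)
      simp only [← tailSit_snoc] at this
      exact this
  · match k with
    | 0 => exact le_max_right _ _
    | 1 => exact le_max_right _ _
    | k + 2 => exact le_max_of_le_left (hB _ _)
  · have hlim : pathLimsup (tailProc F) ω = pathLimsup F (fun i => ω (i + 1)) :=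
      (pathLimsup_eq_of_succ fun k => rfl).symm
    rw [hlim]
    refine hFf _ ?_
    change tailSit (res ω (n + 2)) = t
    rw [hω, tailSit_consSit]

/-- Minorants can be moved in time both ways because, after time `0`, the local models of a
Markov chain only depend on the last state. -/
lemma lexp_markovQ_cons_shift (hE₁ : IsLE E₁) (hQT : ∀ x, IsLE (QT x)) {n : ℕ} (x : X)
    (t : Sit (fun _ => X) (n + 1)) (f : Path (fun _ => X) → EReal) :
    lexp (markovQ E₁ QT) (consSit x t) (fun ω => f (fun i => ω (i + 1)))
      = lexp (markovQ E₁ QT) t f :=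
  le_antisymm (lexp_le fun _ hG => le_lexp (isMinorant_consProc hE₁ hG))
    (lexp_le fun _ hF => le_lexp (isMinorant_tailProc hE₁ hQT (x := x) hF))

end MarkovShift

section MarkovInitial

variable {X : Type} [Fintype X] [Nonempty X] {E₁ : (X → ℝ) → ℝ} {QT : X → (X → ℝ) → ℝ}

lemma lexp_markovQ_emptySit (hE₁ : IsLE E₁) (hQT : ∀ x, IsLE (QT x))
    (f : Path (fun _ => X) → EReal) :
    lexp (markovQ E₁ QT) emptySit f
      = lowerExt E₁ (fun x => lexp (markovQ E₁ QT) (snoc emptySit x) f) :=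
  lexp_eq_lowerExt (markovQ_isLE hE₁ hQT) emptySit f

lemma lexp_markovQ_snoc_emptySit_shift (hE₁ : IsLE E₁) (hQT : ∀ x, IsLE (QT x)) (x : X)
    (f : Path (fun _ => X) → EReal) :
    lexp (markovQ E₁ QT) (snoc emptySit x) (fun ω => f (fun i => ω (i + 1)))
      = lowerExt (QT x) (fun y => lexp (markovQ E₁ QT) (snoc emptySit y) f) := by
  rw [lexp_eq_lowerExt (markovQ_isLE hE₁ hQT)]
  simp only [← consSit_emptySit, ← consSit_snoc, lexp_markovQ_cons_shift hE₁ hQT]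
  rfl

lemma lexp_markovQ_emptySit_shift (hE₁ : IsLE E₁) (hQT : ∀ x, IsLE (QT x))
    (f : Path (fun _ => X) → EReal) :
    lexp (markovQ E₁ QT) emptySit (fun ω => f (fun i => ω (i + 1)))
      = lowerExt E₁ (fun x => lowerExt (QT x)
          (fun y => lexp (markovQ E₁ QT) (snoc emptySit y) f)) := by
  simp only [lexp_markovQ_emptySit hE₁ hQT, lexp_markovQ_snoc_emptySit_shift hE₁ hQT]

lemma lexp_snoc_emptySit_comp_zero {Q : ∀ n, Sit (fun _ => X) n → (X → ℝ) → ℝ}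
    (hQ : ∀ n s, IsLE (Q n s)) (g : X → ℝ) (x : X) :
    lexp Q (snoc emptySit x) (fun ω => (g (ω 0) : EReal)) = g x :=
  lexp_of_eqOn_cylinder hQ fun ω hω => by
    rw [← snoc_apply_self emptySit x, ← hω]
    rfl

end MarkovInitial

section Stationary

variable {X : Type} [Nonempty X] {T : (X → ℝ) → X → ℝ} {Einf : (X → ℝ) → ℝ}

lemma limit_comp_of_tendsto_iterate
    (hPF : ∀ h x, Tendsto (fun n => (T^[n] h) x) atTop (𝓝 (Einf h))) (h : X → ℝ) :
    Einf (T h) = Einf h := by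
  obtain ⟨x⟩ := ‹Nonempty X›
  refine tendsto_nhds_unique (hPF (T h) x) ?_
  have := (hPF h x).comp (tendsto_add_atTop_nat 1)
  simpa only [Function.comp_def, Function.iterate_succ_apply] using this

lemma eq_limit_of_invariant [Fintype X] {E₁ : (X → ℝ) → ℝ} (hE₁ : IsLE E₁)
    (hPF : ∀ h x, Tendsto (fun n => (T^[n] h) x) atTop (𝓝 (Einf h)))
    (hinv : ∀ h, E₁ (T h) = E₁ h) (h : X → ℝ) : E₁ h = Einf h := by
  have hconst : ∀ n, E₁ (T^[n] h) = E₁ h := fun n => by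
    induction n with
    | zero => rfl
    | succ n ih => rw [Function.iterate_succ_apply', hinv, ih]
  refine tendsto_nhds_unique ?_ (hE₁.tendsto_of_forall_tendsto (hPF h))
  simp only [hconst, tendsto_const_nhds]

end Stationary

/-- Stationarity: the chain is stationary iff its initial model is the stationary lower
expectation. -/
theorem stationarity {X : Type} [Fintype X] [Nonempty X]
    (E1 : (X → ℝ) → ℝ) (T : (X → ℝ) → X → ℝ)
    (hE1 : IsLE E1) (hT : ∀ x : X, IsLE (fun h => T h x))
    (Einf : (X → ℝ) → ℝ)
    (hPF : ∀ (h : X → ℝ) (x : X), Tendsto (fun n => (T^[n] h) x) atTop (nhds (Einf h))) :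
    (∀ f : Path (fun _ => X) → EReal,
        lexp (markovQ E1 (fun x h => T h x)) emptySit f
          = lexp (markovQ E1 (fun x h => T h x)) emptySit (fun ω => f (fun i => ω (i + 1))))
      ↔ (∀ h : X → ℝ, E1 h = Einf h) := by
  have hQ := markovQ_isLE hE1 hT
  constructor
  · intro hstat
    refine eq_limit_of_invariant hE1 hPF fun g => ?_
    let f : Path (fun _ => X) → EReal := fun ω => g (ω 0)
    have h := (lexp_markovQ_emptySit hE1 hT f).symm.trans
      ((hstat f).trans (lexp_markovQ_emptySit_shift hE1 hT f))
    simp only [f, lexp_snoc_emptySit_comp_zero hQ, lowerExt_coe (hT _), lowerExt_coe hE1] at h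
    exact_mod_cast h.symm
  · intro hEinf f
    have hinv : ∀ g, E1 (T g) = E1 g := fun g => by
      rw [hEinf, hEinf, limit_comp_of_tendsto_iterate hPF]
    rw [lexp_markovQ_emptySit hE1 hT, lexp_markovQ_emptySit_shift hE1 hT]
    exact (lowerExt_Text_of_invariant hE1 hT hinv _).symm

end IP
end
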